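/- arXiv:1708.09819 — 3 statements merged into one kernel-verified Lean document; each statement's English description precedes it below -/
import Mathlib

section
/- Let G be a 4-regular plane multigraph that contains K4 as a subgraph on vertices a, b, c, d, with d inside the cycle through a, b, c in the embedding. Then some vertex among a, b, c has two of its four incident edges drawn inside the cycle through a, b, c. -/
open Set

/-- `S` is a Jordan arc in the plane (identified with `ℂ`) from `p` to `q`. -/
def IsArc (p q : ℂ) (S : Set ℂ) : Prop :=
  ∃ γ : ℝ → ℂ, ContinuousOn γ (Set.Icc 0 1) ∧ Set.InjOn γ (Set.Icc 0 1) ∧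
    γ 0 = p ∧ γ 1 = q ∧ γ '' Set.Icc 0 1 = S

/-- A multigraph drawn in the plane without crossings: vertices are distinct points, every edge
is a Jordan arc between the positions of its (distinct) endpoints, two distinct edges meet at
most in common endpoints, and no vertex lies in the relative interior of an edge. -/
structure PlaneMultigraph (V E : Type) where
  pos : V → ℂ
  pos_inj : Function.Injective pos
  fst : E → V
  snd : E → V
  arc : E → Set ℂ
  arc_isArc : ∀ e, IsArc (pos (fst e)) (pos (snd e)) (arc e)
  no_loop : ∀ e, fst e ≠ snd e
  arcs_disj : ∀ e e', e ≠ e' →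
    Disjoint (arc e \ {pos (fst e), pos (snd e)}) (arc e' \ {pos (fst e'), pos (snd e')})
  no_vertex_mid : ∀ e v, pos v ∈ arc e → v = fst e ∨ v = snd e

namespace PlaneMultigraph

variable {V E : Type} (G : PlaneMultigraph V E)

/-- The edge `e` is incident to the vertex `v`. -/
def Inc (v : V) (e : E) : Prop := G.fst e = v ∨ G.snd e = v

/-- The edge `e` joins the vertices `x` and `y`. -/
def Between (e : E) (x y : V) : Prop :=
  (G.fst e = x ∧ G.snd e = y) ∨ (G.fst e = y ∧ G.snd e = x)

/-- Every vertex has degree exactly `4`. -/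
def FourRegular : Prop := ∀ v : V, Nat.card {e : E // G.Inc v e} = 4

/-- Adjacency of vertices. -/
def Adj (x y : V) : Prop := ∃ e, G.Between e x y

/-- The (combinatorial) connectivity of the drawn multigraph. -/
def Conn : Prop := Nonempty V ∧ ∀ x y : V, Relation.ReflTransGen G.Adj x y

/-- The set of points of the plane covered by the drawing. -/
def drawing : Set ℂ := Set.range G.pos ∪ ⋃ e, G.arc e

/-- The relative interior of the arc of the edge `e`. -/
def arcInt (e : E) : Set ℂ := G.arc e \ {G.pos (G.fst e), G.pos (G.snd e)}

/-- The set of points of the face `F` (a connected component of the complement of the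
drawing), viewed as a subset of the plane. -/
def faceSet (F : ConnectedComponents ↥(G.drawingᶜ)) : Set ℂ :=
  Subtype.val '' (ConnectedComponents.mk ⁻¹' {F})

end PlaneMultigraph

/-- The interior region bounded by a closed curve `S`: the points outside `S` whose connected
component in the complement of `S` is bounded. -/
def InsideCycle (S : Set ℂ) : Set ℂ :=
  {x | x ∉ S ∧ Bornology.IsBounded (connectedComponentIn Sᶜ x)}

lemma mem_insideCycle {S : Set ℂ} {x : ℂ} :
    x ∈ InsideCycle S ↔ x ∉ S ∧ Bornology.IsBounded (connectedComponentIn Sᶜ x) := Iff.rfl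

/-- An arc can be reversed. -/
lemma IsArc.symm {p q : ℂ} {A : Set ℂ} (h : IsArc p q A) : IsArc q p A := by
  obtain ⟨γ, hc, hi, h0, h1, himg⟩ := h
  have hmem : ∀ x : ℝ, x ∈ Icc (0:ℝ) 1 → 1 - x ∈ Icc (0:ℝ) 1 := by
    intro x hx
    rw [mem_Icc] at hx ⊢
    constructor <;> linarith [hx.1, hx.2]
  have hmap : (fun t : ℝ => 1 - t) '' Icc 0 1 = Icc 0 1 := by
    ext x
    constructor
    · rintro ⟨t, ht, rfl⟩; exact hmem t ht
    · intro hx; exact ⟨1 - x, hmem x hx, by ring⟩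
  refine ⟨γ ∘ (fun t => 1 - t), ?_, ?_, by simp [h1], by simp [h0], ?_⟩
  · exact hc.comp ((continuous_const.sub continuous_id).continuousOn) fun x hx => hmem x hx
  · intro x hx y hy hxy
    have : (1 : ℝ) - x = 1 - y := hi (hmem x hx) (hmem y hy) hxy
    linarith
  · rw [image_comp, hmap, himg]

/-- Endpoints belong to the arc. -/
lemma IsArc.left_mem {p q : ℂ} {A : Set ℂ} (h : IsArc p q A) : p ∈ A := by
  obtain ⟨γ, _, _, h0, _, himg⟩ := h
  rw [← himg]; exact ⟨0, by norm_num, h0⟩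

lemma IsArc.right_mem {p q : ℂ} {A : Set ℂ} (h : IsArc p q A) : q ∈ A := by
  obtain ⟨γ, _, _, _, h1, himg⟩ := h
  rw [← himg]; exact ⟨1, by norm_num, h1⟩

/-- Key topological lemma: if an arc avoids `S` except possibly at its endpoints, and its
first endpoint is inside the cycle `S`, then the whole open arc is inside the cycle, and the
other endpoint, if off `S`, is inside as well. -/
lemma arc_inside {p q : ℂ} {A S : Set ℂ} (hA : IsArc p q A)
    (hp : p ∈ InsideCycle S) (hdisj : ∀ x ∈ A \ {p, q}, x ∉ S) :
    (∀ x ∈ A \ {p, q}, x ∈ InsideCycle S) ∧ (q ∉ S → q ∈ InsideCycle S) := by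
  obtain ⟨hpS, hpb⟩ := mem_insideCycle.mp hp
  obtain ⟨γ, hc, hi, h0, h1, himg⟩ := hA
  have h0m : (0 : ℝ) ∈ Icc (0 : ℝ) 1 := by norm_num
  have h1m : (1 : ℝ) ∈ Icc (0 : ℝ) 1 := by norm_num
  have hmid : ∀ t ∈ Icc (0:ℝ) 1, t ≠ 0 → t ≠ 1 → γ t ∈ A \ {p, q} := by
    intro t ht ht0 ht1
    refine ⟨by rw [← himg]; exact mem_image_of_mem _ ht, ?_⟩
    simp only [mem_insert_iff, mem_singleton_iff, not_or]
    constructor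
    · rw [← h0]; exact fun hE => ht0 (hi ht h0m hE)
    · rw [← h1]; exact fun hE => ht1 (hi ht h1m hE)
  have hCsub : γ '' Ico (0:ℝ) 1 ⊆ Sᶜ := by
    rintro x ⟨t, ht, rfl⟩
    rcases eq_or_ne t 0 with rfl | ht0
    · rw [h0]; exact hpS
    · exact hdisj _ (hmid t ⟨ht.1, ht.2.le⟩ ht0 (ne_of_lt ht.2))
  have hCpre : IsPreconnected (γ '' Ico (0:ℝ) 1) :=
    isPreconnected_Ico.image γ (hc.mono Ico_subset_Icc_self)
  have hpC : p ∈ γ '' Ico (0:ℝ) 1 := ⟨0, by norm_num, h0⟩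
  have hsub := hCpre.subset_connectedComponentIn hpC hCsub
  constructor
  · intro x hx
    have hxC : x ∈ γ '' Ico (0:ℝ) 1 := by
      obtain ⟨hxA, hxpq⟩ := hx
      rw [← himg] at hxA
      obtain ⟨t, ht, rfl⟩ := hxA
      simp only [mem_insert_iff, mem_singleton_iff, not_or] at hxpq
      have ht0 : t ≠ 0 := fun h => hxpq.1 (by rw [h, h0])
      have ht1 : t ≠ 1 := fun h => hxpq.2 (by rw [h, h1])
      exact ⟨t, ⟨ht.1, lt_of_le_of_ne ht.2 ht1⟩, rfl⟩
    refine mem_insideCycle.mpr ⟨hdisj x hx, ?_⟩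
    rw [← connectedComponentIn_eq (hsub hxC)]
    exact hpb
  · intro hq
    have hAsub : A ⊆ Sᶜ := by
      rw [← himg]
      rintro x ⟨t, ht, rfl⟩
      rcases eq_or_ne t 0 with rfl | ht0
      · rw [h0]; exact hpS
      rcases eq_or_ne t 1 with rfl | ht1
      · rw [h1]; exact hq
      · exact hdisj _ (hmid t ht ht0 ht1)
    have hApre : IsPreconnected A := by
      rw [← himg]; exact isPreconnected_Icc.image γ hc
    have hpA : p ∈ A := by rw [← himg]; exact ⟨0, h0m, h0⟩
    have hqA : q ∈ A := by rw [← himg]; exact ⟨1, h1m, h1⟩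
    have hsub2 := hApre.subset_connectedComponentIn hpA hAsub
    refine mem_insideCycle.mpr ⟨hq, ?_⟩
    rw [← connectedComponentIn_eq (hsub2 hqA)]
    exact hpb

/-- Let `G` be a 4-regular plane multigraph containing `K₄` as a subgraph on
vertices `a, b, c, d`, with `d` drawn inside the cycle through `a, b, c`. Then some vertex
among `a, b, c` has two of its four incident edges drawn inside that cycle. -/
theorem stmt_1 {V E : Type} [Finite V] [Finite E] (G : PlaneMultigraph V E)
    (hreg : G.FourRegular) (a b c d : V)
    (hab : a ≠ b) (hac : a ≠ c) (had : a ≠ d) (hbc : b ≠ c) (hbd : b ≠ d) (hcd : c ≠ d)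
    (eab eac ebc ead ebd ecd : E)
    (h1 : G.Between eab a b) (h2 : G.Between eac a c) (h3 : G.Between ebc b c)
    (h4 : G.Between ead a d) (h5 : G.Between ebd b d) (h6 : G.Between ecd c d)
    (hd_in : G.pos d ∈ InsideCycle (G.arc eab ∪ G.arc ebc ∪ G.arc eac)) :
    ∃ v ∈ ({a, b, c} : Set V), ∃ e1 e2 : E, e1 ≠ e2 ∧ G.Inc v e1 ∧ G.Inc v e2 ∧
      G.arcInt e1 ⊆ InsideCycle (G.arc eab ∪ G.arc ebc ∪ G.arc eac) ∧
      G.arcInt e2 ⊆ InsideCycle (G.arc eab ∪ G.arc ebc ∪ G.arc eac) := by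
  classical
  cases nonempty_fintype V
  cases nonempty_fintype E
  set S : Set ℂ := G.arc eab ∪ G.arc ebc ∪ G.arc eac with hS
  -- positions of a, b, c are on S
  have hposmem : ∀ (e : E) (x y : V), G.Between e x y → G.pos x ∈ G.arc e := by
    intro e x y hB
    rcases hB with ⟨hf, _⟩ | ⟨_, hs⟩
    · rw [← hf]; exact (G.arc_isArc e).left_mem
    · rw [← hs]; exact (G.arc_isArc e).right_mem
  have haS : G.pos a ∈ S := Or.inl (Or.inl (hposmem eab a b h1))
  have hbS : G.pos b ∈ S := Or.inl (Or.inr (hposmem ebc b c h3))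
  have hcS : G.pos c ∈ S := Or.inr (hposmem eac c a (Or.symm h2))
  -- no vertex position lies in the interior of an arc
  have hnomid : ∀ (e : E) (u : V), G.pos u ∉ G.arcInt e := by
    intro e u hu
    rcases G.no_vertex_mid e u hu.1 with h | h <;>
      exact hu.2 (by rw [h]; simp)
  -- the set of interior vertices
  set W : Set V := {v | G.pos v ∈ InsideCycle S} with hW
  have hdW : d ∈ W := hd_in
  have haW : a ∉ W := fun h => (mem_insideCycle.mp h).1 haS
  have hbW : b ∉ W := fun h => (mem_insideCycle.mp h).1 hbS
  have hcW : c ∉ W := fun h => (mem_insideCycle.mp h).1 hcS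
  -- key lemma: an edge with an endpoint in W has its interior inside the cycle, and its
  -- other endpoint is in W or is one of a, b, c
  have key : ∀ (e : E) (v w : V),
      ((G.fst e = v ∧ G.snd e = w) ∨ (G.fst e = w ∧ G.snd e = v)) → v ∈ W →
      (G.arcInt e ⊆ InsideCycle S) ∧ (w = a ∨ w = b ∨ w = c ∨ w ∈ W) := by
    intro e v w hvw hvW
    have hvI : G.pos v ∈ InsideCycle S := hvW
    have hvS : G.pos v ∉ S := (mem_insideCycle.mp hvI).1
    -- e is none of the three cycle edges
    have hnetri : e ≠ eab ∧ e ≠ ebc ∧ e ≠ eac := by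
      refine ⟨?_, ?_, ?_⟩ <;> rintro rfl
      · rcases h1 with ⟨hf, hs⟩ | ⟨hf, hs⟩ <;> rcases hvw with ⟨hf', hs'⟩ | ⟨hf', hs'⟩ <;>
          first
          | exact hvS (by rw [hf'.symm.trans hf]; exact haS)
          | exact hvS (by rw [hs'.symm.trans hs]; exact hbS)
          | exact hvS (by rw [hf'.symm.trans hf]; exact hbS)
          | exact hvS (by rw [hs'.symm.trans hs]; exact haS)
      · rcases h3 with ⟨hf, hs⟩ | ⟨hf, hs⟩ <;> rcases hvw with ⟨hf', hs'⟩ | ⟨hf', hs'⟩ <;>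
          first
          | exact hvS (by rw [hf'.symm.trans hf]; exact hbS)
          | exact hvS (by rw [hs'.symm.trans hs]; exact hcS)
          | exact hvS (by rw [hf'.symm.trans hf]; exact hcS)
          | exact hvS (by rw [hs'.symm.trans hs]; exact hbS)
      · rcases h2 with ⟨hf, hs⟩ | ⟨hf, hs⟩ <;> rcases hvw with ⟨hf', hs'⟩ | ⟨hf', hs'⟩ <;>
          first
          | exact hvS (by rw [hf'.symm.trans hf]; exact haS)
          | exact hvS (by rw [hs'.symm.trans hs]; exact hcS)
          | exact hvS (by rw [hf'.symm.trans hf]; exact hcS)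
          | exact hvS (by rw [hs'.symm.trans hs]; exact haS)
    -- the interior of the arc of e avoids S
    have hdisjS : ∀ x ∈ G.arcInt e, x ∉ S := by
      intro x hx hxS
      have hgen : ∀ e' : E, e ≠ e' → x ∈ G.arc e' → False := by
        intro e' hne hxe'
        by_cases hi' : x ∈ G.arcInt e'
        · exact Set.disjoint_left.mp (G.arcs_disj e e' hne) hx hi'
        · have : x ∈ ({G.pos (G.fst e'), G.pos (G.snd e')} : Set ℂ) := by
            by_contra hno
            exact hi' ⟨hxe', hno⟩
          rcases this with h | h
          · exact hnomid e (G.fst e') (h ▸ hx)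
          · exact hnomid e (G.snd e') (h ▸ hx)
      rcases hxS with (h | h) | h
      · exact hgen eab hnetri.1 h
      · exact hgen ebc hnetri.2.1 h
      · exact hgen eac hnetri.2.2 h
    -- set up the arc from pos v to pos w
    have harc : IsArc (G.pos v) (G.pos w) (G.arc e) ∧
        G.arcInt e = G.arc e \ {G.pos v, G.pos w} := by
      rcases hvw with ⟨hf, hs⟩ | ⟨hf, hs⟩
      · rw [← hf, ← hs]; exact ⟨G.arc_isArc e, rfl⟩
      · rw [← hf, ← hs]
        exact ⟨(G.arc_isArc e).symm, by rw [PlaneMultigraph.arcInt, Set.pair_comm]⟩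
    rw [harc.2] at hdisjS ⊢
    have := arc_inside harc.1 hvI hdisjS
    refine ⟨this.1, ?_⟩
    by_cases hwS : G.pos w ∈ S
    · -- w is a vertex on S, hence one of a, b, c
      rcases hwS with (h | h) | h
      · rcases G.no_vertex_mid eab w h with he | he <;> rcases h1 with ⟨hf, hs⟩ | ⟨hf, hs⟩
        · exact Or.inl (he.trans hf)
        · exact Or.inr (Or.inl (he.trans hf))
        · exact Or.inr (Or.inl (he.trans hs))
        · exact Or.inl (he.trans hs)
      · rcases G.no_vertex_mid ebc w h with he | he <;> rcases h3 with ⟨hf, hs⟩ | ⟨hf, hs⟩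
        · exact Or.inr (Or.inl (he.trans hf))
        · exact Or.inr (Or.inr (Or.inl (he.trans hf)))
        · exact Or.inr (Or.inr (Or.inl (he.trans hs)))
        · exact Or.inr (Or.inl (he.trans hs))
      · rcases G.no_vertex_mid eac w h with he | he <;> rcases h2 with ⟨hf, hs⟩ | ⟨hf, hs⟩
        · exact Or.inl (he.trans hf)
        · exact Or.inr (Or.inr (Or.inl (he.trans hf)))
        · exact Or.inr (Or.inr (Or.inl (he.trans hs)))
        · exact Or.inl (he.trans hs)
    · exact Or.inr (Or.inr (Or.inr (this.2 hwS)))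
  -- counting setup
  set n : E → ℕ := fun e =>
    (if G.fst e ∈ W then 1 else 0) + (if G.snd e ∈ W then 1 else 0) with hn
  set Wf : Finset V := Finset.univ.filter (· ∈ W) with hWf
  set Bf : Finset E := Finset.univ.filter (fun e => n e = 1) with hBf
  -- the degree sum identity
  have hsum : ∑ e : E, n e = 4 * Wf.card := by
    calc ∑ e : E, n e
        = ∑ e : E, ∑ v ∈ Wf,
            ((if G.fst e = v then 1 else 0) + (if G.snd e = v then 1 else 0)) := by
          refine Finset.sum_congr rfl fun e _ => ?_
          rw [Finset.sum_add_distrib, Finset.sum_ite_eq, Finset.sum_ite_eq]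
          simp [hn, hWf]
      _ = ∑ v ∈ Wf, ∑ e : E,
            ((if G.fst e = v then 1 else 0) + (if G.snd e = v then 1 else 0)) :=
          Finset.sum_comm
      _ = ∑ v ∈ Wf, (4 : ℕ) := by
          refine Finset.sum_congr rfl fun v _ => ?_
          have : ∀ e : E,
              ((if G.fst e = v then 1 else 0) + (if G.snd e = v then 1 else 0) : ℕ)
              = if G.Inc v e then 1 else 0 := by
            intro e
            by_cases hf : G.fst e = v <;> by_cases hs : G.snd e = v
            · exact absurd (hf.trans hs.symm) (G.no_loop e)
            all_goals simp [PlaneMultigraph.Inc, hf, hs]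
          rw [Finset.sum_congr rfl fun e _ => this e, ← Finset.card_filter]
          have h4' := hreg v
          rw [Nat.card_eq_fintype_card, Fintype.card_subtype] at h4'
          exact h4'
      _ = 4 * Wf.card := by rw [Finset.sum_const, smul_eq_mul, mul_comm]
  -- parity: Bf has even cardinality
  have heven : 2 ∣ Bf.card := by
    have hcast : ((Bf.card : ℕ) : ZMod 2) = 0 := by
      have h0 : ((∑ e : E, n e : ℕ) : ZMod 2) = ((4 * Wf.card : ℕ) : ZMod 2) := by
        rw [hsum]
      have hr : ((4 * Wf.card : ℕ) : ZMod 2) = 0 := by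
        push_cast
        rw [show ((4 : ZMod 2) = 0) from rfl, zero_mul]
      have hl : ((∑ e : E, n e : ℕ) : ZMod 2)
          = ∑ e : E, (if n e = 1 then (1 : ZMod 2) else 0) := by
        push_cast
        refine Finset.sum_congr rfl fun e _ => ?_
        by_cases hf : G.fst e ∈ W <;> by_cases hs : G.snd e ∈ W <;>
          simp [hn, hf, hs] <;> rfl
      have hb : ∑ e : E, (if n e = 1 then (1 : ZMod 2) else 0) = (Bf.card : ZMod 2) := by
        rw [hBf, Finset.card_filter]
        push_cast
        refine Finset.sum_congr rfl fun e _ => ?_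
        by_cases h : n e = 1 <;> simp [h]
      rw [← hb, ← hl, h0, hr]
    exact (ZMod.natCast_eq_zero_iff _ _).mp hcast
  -- the three edges to d are in Bf and are pairwise distinct
  have hmemB : ∀ (e : E) (x : V), G.Between e x d → x ∉ W → e ∈ Bf := by
    intro e x hB hx
    simp only [hBf, Finset.mem_filter, Finset.mem_univ, true_and]
    rcases hB with ⟨hf, hs⟩ | ⟨hf, hs⟩ <;> simp [hn, hf, hs, hx, hdW]
  have hB1 : ead ∈ Bf := hmemB ead a h4 haW
  have hB2 : ebd ∈ Bf := hmemB ebd b h5 hbW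
  have hB3 : ecd ∈ Bf := hmemB ecd c h6 hcW
  have hne12 : ead ≠ ebd := by
    rintro rfl
    rcases h4 with ⟨hf, hs⟩ | ⟨hf, hs⟩ <;> rcases h5 with ⟨hf', hs'⟩ | ⟨hf', hs'⟩ <;>
      simp_all
  have hne13 : ead ≠ ecd := by
    rintro rfl
    rcases h4 with ⟨hf, hs⟩ | ⟨hf, hs⟩ <;> rcases h6 with ⟨hf', hs'⟩ | ⟨hf', hs'⟩ <;>
      simp_all
  have hne23 : ebd ≠ ecd := by
    rintro rfl
    rcases h5 with ⟨hf, hs⟩ | ⟨hf, hs⟩ <;> rcases h6 with ⟨hf', hs'⟩ | ⟨hf', hs'⟩ <;>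
      simp_all
  have h3le : 3 ≤ Bf.card := by
    have hsub : ({ead, ebd, ecd} : Finset E) ⊆ Bf := by
      intro x hx
      simp only [Finset.mem_insert, Finset.mem_singleton] at hx
      rcases hx with rfl | rfl | rfl <;> assumption
    have hcard : ({ead, ebd, ecd} : Finset E).card = 3 := by
      rw [Finset.card_insert_of_notMem (by simp [hne12, hne13]),
        Finset.card_insert_of_notMem (by simp [hne23]), Finset.card_singleton]
    rw [← hcard]
    exact Finset.card_le_card hsub
  have h4le : 4 ≤ Bf.card := by omega
  -- the map sending a boundary edge to its endpoint outside W
  set g : E → V := fun e => if G.fst e ∈ W then G.snd e else G.fst e with hg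
  have hmaps : ∀ e ∈ Bf, g e ∈ ({a, b, c} : Finset V) := by
    intro e he
    simp only [hBf, Finset.mem_filter, Finset.mem_univ, true_and] at he
    by_cases hf : G.fst e ∈ W
    · have hs : G.snd e ∉ W := by
        intro hsW
        simp [hn, hf, hsW] at he
      have := (key e (G.fst e) (G.snd e) (Or.inl ⟨rfl, rfl⟩) hf).2
      rcases this with h | h | h | h
      · simp [hg, hf, h, haW, hbW, hcW]
      · simp [hg, hf, h, haW, hbW, hcW]
      · simp [hg, hf, h, haW, hbW, hcW]
      · exact absurd h hs
    · have hsW : G.snd e ∈ W := by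
        by_contra hsW
        simp [hn, hf, hsW] at he
      have := (key e (G.snd e) (G.fst e) (Or.inr ⟨rfl, rfl⟩) hsW).2
      rcases this with h | h | h | h
      · simp [hg, hf, h, haW, hbW, hcW]
      · simp [hg, hf, h, haW, hbW, hcW]
      · simp [hg, hf, h, haW, hbW, hcW]
      · exact absurd h hf
  have hcardlt : ({a, b, c} : Finset V).card < Bf.card := by
    have ht1 := Finset.card_insert_le a ({b, c} : Finset V)
    have ht2 := Finset.card_insert_le b ({c} : Finset V)
    have ht3 : ({c} : Finset V).card = 1 := Finset.card_singleton c
    omega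
  obtain ⟨e1, he1, e2, he2, hne, heq⟩ :=
    Finset.exists_ne_map_eq_of_card_lt_of_maps_to hcardlt hmaps
  -- the common vertex
  have hIncg : ∀ e : E, G.Inc (g e) e := by
    intro e
    by_cases hf : G.fst e ∈ W <;> simp [PlaneMultigraph.Inc, hg, hf]
  have hInside : ∀ e ∈ Bf, G.arcInt e ⊆ InsideCycle S := by
    intro e he
    simp only [hBf, Finset.mem_filter, Finset.mem_univ, true_and] at he
    by_cases hf : G.fst e ∈ W
    · exact (key e (G.fst e) (G.snd e) (Or.inl ⟨rfl, rfl⟩) hf).1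
    · have hsW : G.snd e ∈ W := by
        by_contra hsW
        simp [hn, hf, hsW] at he
      exact (key e (G.snd e) (G.fst e) (Or.inr ⟨rfl, rfl⟩) hsW).1
  refine ⟨g e1, ?_, e1, e2, hne, hIncg e1, heq ▸ hIncg e2, hInside e1 he1, hInside e2 he2⟩
  have := hmaps e1 he1
  simp only [Finset.mem_insert, Finset.mem_singleton] at this
  simpa using this
end

section
/- Let G' be obtained from a biconnected loopless 4-regular multigraph G by contracting a maximal chain of lenses u_1, ..., u_k (k ≥ 2), i.e., deleting the internal vertices u_2, ..., u_{k-1} together with their incident edges and adding two parallel edges between u_1 and u_k. Then G' is again a biconnected loopless 4-regular multigraph. -/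
/-- The edge `e` joins the vertices `x` and `y` (in either orientation). -/
def MGBetween {V E : Type} (f s : E → V) (e : E) (x y : V) : Prop :=
  (f e = x ∧ s e = y) ∨ (f e = y ∧ s e = x)

/-- The edge `e` is incident to the vertex `v`. -/
def MGInc {V E : Type} (f s : E → V) (v : V) (e : E) : Prop := f e = v ∨ s e = v

/-- Two vertices are adjacent if some edge joins them. -/
def MGAdj {V E : Type} (f s : E → V) (x y : V) : Prop := ∃ e, MGBetween f s e x y

/-- The multigraph has no loops. -/
def MGLoopless {V E : Type} (f s : E → V) : Prop := ∀ e, f e ≠ s e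

/-- Every vertex has degree exactly `4`. -/
def MGFourRegular {V E : Type} (f s : E → V) : Prop :=
  ∀ v : V, Nat.card {e : E // MGInc f s v e} = 4

/-- The multigraph is connected. -/
def MGConnected {V E : Type} (f s : E → V) : Prop :=
  Nonempty V ∧ ∀ u v : V, Relation.ReflTransGen (MGAdj f s) u v

/-- Reachability by walks avoiding the vertex `w`. -/
def MGReachAvoiding {V E : Type} (f s : E → V) (w : V) : V → V → Prop :=
  Relation.ReflTransGen (fun x y => x ≠ w ∧ y ≠ w ∧ MGAdj f s x y)

/-- The multigraph is biconnected: connected and without cutvertices. -/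
def MGBiconnected {V E : Type} (f s : E → V) : Prop :=
  MGConnected f s ∧ ∀ w u v : V, u ≠ w → v ≠ w → MGReachAvoiding f s w u v

/-- Reachability by walks avoiding both vertices `u` and `v`. -/
def MGReachAvoiding2 {V E : Type} (f s : E → V) (u v : V) : V → V → Prop :=
  Relation.ReflTransGen (fun x y => x ≠ u ∧ x ≠ v ∧ y ≠ u ∧ y ≠ v ∧ MGAdj f s x y)

/-!
Contracting the chain is an instance of a general operation: delete a vertex set `D` and an
edge set `C`, where `C`-edges only meet `D ∪ {a, b}` and `D` only meets `C`-edges, then add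
new parallel edges between `a ≠ b`. No loop appears since `a ≠ b`. A surviving vertex loses
its `C`-edges and gains its new edges; at both ends of the chain these are two each, elsewhere
none. For biconnectivity, collapse `D` onto an end `c` of the chain other than the prospective
cutvertex `w`: every edge of `G` becomes an edge or a single vertex of `G'`, so a walk avoiding
`w` in `G` projects to a walk avoiding `w` in `G'`.
-/

section Multigraph

variable {V E : Type} {f s : E → V}

theorem MGBetween.symm {e : E} {x y : V} (h : MGBetween f s e x y) : MGBetween f s e y x :=
  Or.symm h

theorem MGBetween.inc_left {e : E} {x y : V} (h : MGBetween f s e x y) : MGInc f s x e :=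
  h.imp And.left And.right

theorem MGBetween.inc_right {e : E} {x y : V} (h : MGBetween f s e x y) : MGInc f s y e :=
  h.symm.inc_left

theorem MGBetween.eq_or_eq_of_inc {e : E} {x y z : V} (h : MGBetween f s e x y)
    (hz : MGInc f s z e) : z = x ∨ z = y := by
  rcases h with ⟨rfl, rfl⟩ | ⟨rfl, rfl⟩ <;> rcases hz with rfl | rfl <;> simp

theorem MGAdj.symm {x y : V} (h : MGAdj f s x y) : MGAdj f s y x :=
  h.imp fun _ he => he.symm

theorem MGReachAvoiding.reflTransGen {w x y : V} (h : MGReachAvoiding f s w x y) :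
    Relation.ReflTransGen (MGAdj f s) x y :=
  Relation.ReflTransGen.mono (fun _ _ hxy => hxy.2.2) _ _ h

theorem mgConnected_of_adj_of_reachAvoiding {a b : V} (hab : a ≠ b) (hadj : MGAdj f s a b)
    (h : ∀ w x y : V, x ≠ w → y ≠ w → MGReachAvoiding f s w x y) : MGConnected f s := by
  refine ⟨⟨a⟩, fun x y => ?_⟩
  by_cases hx : x = a
  · subst hx
    by_cases hy : y = b
    · exact hy ▸ .single hadj
    · exact (h b x y hab hy).reflTransGen
  by_cases hy : y = a
  · subst hy
    by_cases hxb : x = b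
    · exact hxb ▸ .single hadj.symm
    · exact (h b x y hxb hab).reflTransGen
  · exact (h a x y hx hy).reflTransGen

end Multigraph

theorem Nat.card_subtype_eq_card_and_add_card_and_not {α : Type} (P Q : α → Prop)
    [Finite {x // P x}] :
    Nat.card {x // P x} = Nat.card {x // P x ∧ Q x} + Nat.card {x // P x ∧ ¬ Q x} := by
  classical
  rw [← Nat.card_congr (Equiv.subtypeSubtypeEquivSubtypeInter P Q),
    ← Nat.card_congr (Equiv.subtypeSubtypeEquivSubtypeInter P (¬ Q ·)), ← Nat.card_sum]
  exact Nat.card_congr (Equiv.sumCompl _).symm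

section Contraction

-- `G'` arises from `G` by deleting the vertices satisfying `D` and the edges satisfying `C`,
-- then adding the edges indexed by `N`, all joining `a` to `b`.

variable {V E N : Type} {f s : E → V} {D : V → Prop} {C : E → Prop}
  {f' s' : {e // ¬ C e} ⊕ N → {v // ¬ D v}} {a b : {v // ¬ D v}}

open Classical in
noncomputable def collapseTo (D : V → Prop) (c : {v // ¬ D v}) (x : V) : {v // ¬ D v} :=
  if h : D x then c else ⟨x, h⟩

theorem collapseTo_of_not (c : {v // ¬ D v}) {x : V} (hx : ¬ D x) :
    collapseTo D c x = ⟨x, hx⟩ :=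
  dif_neg hx

theorem collapseTo_of_mem (c : {v // ¬ D v}) {x : V} (hx : D x) : collapseTo D c x = c :=
  dif_pos hx

@[simp]
theorem collapseTo_val (c x : {v // ¬ D v}) : collapseTo D c x = x :=
  collapseTo_of_not c x.2

theorem collapseTo_ne {c w : {v // ¬ D v}} (hcw : c ≠ w) {x : V} (hx : x ≠ w.val) :
    collapseTo D c x ≠ w := by
  by_cases h : D x
  · rwa [collapseTo_of_mem c h]
  · rw [collapseTo_of_not c h]
    exact fun h' => hx (congrArg Subtype.val h')

variable (hf' : ∀ e, (f' (.inl e) : V) = f e ∧ (s' (.inl e) : V) = s e)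
  (hnew : ∀ j, f' (.inr j) = a ∧ s' (.inr j) = b)
  (hC : ∀ e, C e → ∀ x, MGInc f s x e → D x ∨ x = a ∨ x = b)
  (hD : ∀ e, ¬ C e → ∀ x, MGInc f s x e → ¬ D x)
include hf' hnew

theorem MGLoopless.contract (hloop : MGLoopless f s) (hab : a ≠ b) : MGLoopless f' s' := by
  rintro (e | j) h
  · exact hloop e ((hf' e).1.symm.trans ((congrArg Subtype.val h).trans (hf' e).2))
  · exact hab ((hnew j).1.symm.trans (h.trans (hnew j).2))

include hC hD in
theorem collapseTo_adj [Nonempty N] {c : {v // ¬ D v}} (hc : c = a ∨ c = b) {x y : V}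
    (hxy : MGAdj f s x y) :
    collapseTo D c x = collapseTo D c y ∨ MGAdj f' s' (collapseTo D c x) (collapseTo D c y) := by
  obtain ⟨e, he⟩ := hxy
  by_cases hCe : C e
  · have hend : ∀ z, MGInc f s z e → collapseTo D c z = a ∨ collapseTo D c z = b := by
      intro z hz
      rcases hC e hCe z hz with hDz | rfl | rfl
      · rwa [collapseTo_of_mem c hDz]
      · exact .inl (collapseTo_val c a)
      · exact .inr (collapseTo_val c b)
    have hab : MGAdj f' s' a b := ⟨.inr (Classical.arbitrary N), .inl (hnew _)⟩
    rcases hend x he.inc_left with hx | hx <;> rcases hend y he.inc_right with hy | hy <;>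
      rw [hx, hy]
    exacts [.inl rfl, .inr hab, .inr hab.symm, .inl rfl]
  · have hx := hD e hCe x he.inc_left
    have hy := hD e hCe y he.inc_right
    rw [collapseTo_of_not c hx, collapseTo_of_not c hy]
    refine .inr ⟨.inl ⟨e, hCe⟩, ?_⟩
    simpa only [MGBetween, Subtype.ext_iff, (hf' _).1, (hf' _).2] using he

include hC hD in
theorem MGReachAvoiding.map_collapseTo [Nonempty N] {c w : {v // ¬ D v}} (hc : c = a ∨ c = b)
    (hcw : c ≠ w) {x y : V} (h : MGReachAvoiding f s w x y) :
    MGReachAvoiding f' s' w (collapseTo D c x) (collapseTo D c y) := by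
  refine Relation.ReflTransGen.lift' (collapseTo D c) (fun x y hxy => ?_) _ _ h
  show Relation.ReflTransGen _ (collapseTo D c x) (collapseTo D c y)
  rcases collapseTo_adj hf' hnew hC hD hc hxy.2.2 with heq | hadj
  · exact heq ▸ .refl
  · exact .single ⟨collapseTo_ne hcw hxy.1, collapseTo_ne hcw hxy.2.1, hadj⟩

include hC hD in
theorem MGBiconnected.contract [Nonempty N] (hbi : MGBiconnected f s) (hab : a ≠ b) :
    MGBiconnected f' s' := by
  have hcut : ∀ w x y, x ≠ w → y ≠ w → MGReachAvoiding f' s' w x y := by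
    intro w x y hx hy
    obtain ⟨c, hc, hcw⟩ : ∃ c, (c = a ∨ c = b) ∧ c ≠ w := by
      by_cases haw : a = w
      · exact ⟨b, .inr rfl, fun h => hab (haw.trans h.symm)⟩
      · exact ⟨a, .inl rfl, haw⟩
    simpa only [collapseTo_val] using (hbi.2 w x y (Subtype.coe_injective.ne hx)
      (Subtype.coe_injective.ne hy)).map_collapseTo hf' hnew hC hD hc hcw
  exact ⟨mgConnected_of_adj_of_reachAvoiding hab
    ⟨.inr (Classical.arbitrary N), .inl (hnew _)⟩ hcut, hcut⟩

omit hnew in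
theorem card_inc_contract [Finite N] (v : {v // ¬ D v}) [Finite {e // MGInc f s v e}] :
    Nat.card {e' // MGInc f' s' v e'} + Nat.card {e // MGInc f s v e ∧ C e} =
      Nat.card {e // MGInc f s v e} + Nat.card {j // MGInc f' s' v (.inr j)} := by
  have hkept : {e : {e // ¬ C e} // MGInc f' s' v (.inl e)} ≃ {e // MGInc f s v e ∧ ¬ C e} :=
    (Equiv.subtypeEquivRight fun e => by simp only [MGInc, Subtype.ext_iff, hf']).trans
      ((Equiv.subtypeSubtypeEquivSubtypeInter (¬ C ·) (MGInc f s v)).trans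
        (Equiv.subtypeEquivRight fun _ => and_comm))
  have : Finite {e // MGInc f s v e ∧ ¬ C e} :=
    Finite.of_equiv _ (Equiv.subtypeSubtypeEquivSubtypeInter _ (¬ C ·))
  have : Finite {e : {e // ¬ C e} // MGInc f' s' v (.inl e)} := Finite.of_equiv _ hkept.symm
  rw [Nat.card_congr Equiv.subtypeSum, Nat.card_sum, Nat.card_congr hkept,
    Nat.card_subtype_eq_card_and_add_card_and_not (MGInc f s v) C]
  omega

include hC in
theorem MGFourRegular.contract [Finite N] (hreg : MGFourRegular f s)
    (hCa : Nat.card {e // MGInc f s a e ∧ C e} = Nat.card N)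
    (hCb : Nat.card {e // MGInc f s b e ∧ C e} = Nat.card N) : MGFourRegular f' s' := by
  intro v
  have : Finite {e // MGInc f s v e} := Nat.finite_of_card_ne_zero (by rw [hreg]; norm_num)
  have hcount := card_inc_contract hf' v
  suffices Nat.card {e // MGInc f s v e ∧ C e} = Nat.card {j // MGInc f' s' v (.inr j)} by
    rw [hreg] at hcount
    omega
  by_cases hva : v = a
  · subst hva
    exact hCa.trans (Nat.card_congr (Equiv.subtypeUnivEquiv fun j => .inl (hnew j).1)).symm
  by_cases hvb : v = b
  · subst hvb
    exact hCb.trans (Nat.card_congr (Equiv.subtypeUnivEquiv fun j => .inr (hnew j).2)).symm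
  have : IsEmpty {e // MGInc f s v e ∧ C e} := ⟨fun ⟨e, hinc, hCe⟩ => by
    rcases hC e hCe v hinc with h | h | h
    exacts [v.2 h, hva (Subtype.ext h), hvb (Subtype.ext h)]⟩
  have : IsEmpty {j // MGInc f' s' v (.inr j)} := ⟨fun ⟨j, hj⟩ => by
    rcases hj with h | h
    exacts [hva (h.symm.trans (hnew j).1), hvb (h.symm.trans (hnew j).2)]⟩
  simp only [Nat.card_of_isEmpty]

end Contraction

section Chain

variable {V E : Type} {f s : E → V} {k : ℕ} {u : Fin k → V} {e : E}

def IsChainEdge (f s : E → V) (u : Fin k → V) (e : E) : Prop :=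
  ∃ (j : ℕ) (hj : j + 1 < k),
    MGBetween f s e (u ⟨j, Nat.lt_of_succ_lt hj⟩) (u ⟨j + 1, hj⟩)

def IsChainInterior (u : Fin k → V) (w : V) : Prop :=
  ∃ (i : ℕ) (_ : 0 < i) (h2 : i + 1 < k), w = u ⟨i, Nat.lt_of_succ_lt h2⟩

theorem IsChainEdge.inc {x : V} (he : IsChainEdge f s u e) (hx : MGInc f s x e) (h0 : 0 < k)
    (hk1 : k - 1 < k) : IsChainInterior u x ∨ x = u ⟨0, h0⟩ ∨ x = u ⟨k - 1, hk1⟩ := by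
  obtain ⟨j, hj, hb⟩ := he
  rcases hb.eq_or_eq_of_inc hx with rfl | rfl
  · by_cases hj0 : j = 0
    · subst hj0
      exact .inr (.inl rfl)
    · exact .inl ⟨j, by omega, hj, rfl⟩
  · by_cases hjk : j + 1 = k - 1
    · exact .inr (.inr (congrArg u (Fin.ext hjk)))
    · exact .inl ⟨j + 1, by omega, by omega, rfl⟩

variable (hu : Function.Injective u)
include hu

theorem not_isChainInterior_first (h0 : 0 < k) : ¬ IsChainInterior u (u ⟨0, h0⟩) := by
  rintro ⟨i, hi, _, h⟩
  have := congrArg Fin.val (hu h)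
  simp only at this
  omega

theorem not_isChainInterior_last (hk1 : k - 1 < k) :
    ¬ IsChainInterior u (u ⟨k - 1, hk1⟩) := by
  rintro ⟨i, -, hik, h⟩
  have := congrArg Fin.val (hu h)
  simp only at this
  omega

theorem MGBetween.index_eq_or_eq_succ_of_inc {i j : ℕ} {hi : i < k} {hj : j + 1 < k}
    (he : MGBetween f s e (u ⟨j, Nat.lt_of_succ_lt hj⟩) (u ⟨j + 1, hj⟩))
    (hinc : MGInc f s (u ⟨i, hi⟩) e) : i = j ∨ i = j + 1 :=
  (he.eq_or_eq_of_inc hinc).imp (fun h => congrArg Fin.val (hu h))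
    (fun h => congrArg Fin.val (hu h))

theorem inc_first_and_isChainEdge_iff (h1 : 0 + 1 < k) :
    MGInc f s (u ⟨0, Nat.lt_of_succ_lt h1⟩) e ∧ IsChainEdge f s u e ↔
      MGBetween f s e (u ⟨0, Nat.lt_of_succ_lt h1⟩) (u ⟨0 + 1, h1⟩) := by
  refine ⟨fun ⟨hinc, j, hj, hb⟩ => ?_, fun hb => ⟨hb.inc_left, 0, h1, hb⟩⟩
  obtain rfl : j = 0 := by
    rcases MGBetween.index_eq_or_eq_succ_of_inc hu hb hinc with h | h <;> omega
  exact hb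

theorem inc_last_and_isChainEdge_iff (hk1 : k - 1 < k) (hm : k - 2 + 1 < k) :
    MGInc f s (u ⟨k - 1, hk1⟩) e ∧ IsChainEdge f s u e ↔
      MGBetween f s e (u ⟨k - 2, Nat.lt_of_succ_lt hm⟩) (u ⟨k - 2 + 1, hm⟩) := by
  have hlast : (⟨k - 2 + 1, hm⟩ : Fin k) = ⟨k - 1, hk1⟩ :=
    Fin.ext (show k - 2 + 1 = k - 1 by omega)
  refine ⟨fun ⟨hinc, j, hj, hb⟩ => ?_, fun hb => ⟨?_, k - 2, hm, hb⟩⟩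
  · obtain rfl : j = k - 2 := by
      rcases MGBetween.index_eq_or_eq_succ_of_inc hu hb hinc with h | h <;> omega
    exact hb
  · rw [← hlast]
    exact hb.inc_right

end Chain

/-- Contracting a maximal chain of lenses `u 0, …, u (k-1)` (consecutive
vertices joined by exactly two parallel edges, internal vertices incident only to chain edges)
in a biconnected loopless 4-regular multigraph — deleting the internal vertices with their
incident edges and adding two parallel edges between `u 0` and `u (k-1)` — yields again a
biconnected loopless 4-regular multigraph. -/
theorem stmt_11 {V E : Type} (f s : E → V)
    (hloopless : MGLoopless f s) (hreg : MGFourRegular f s) (hbi : MGBiconnected f s)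
    (k : ℕ) (hk : 2 ≤ k) (u : Fin k → V) (hu : Function.Injective u)
    -- exactly two parallel edges between consecutive chain vertices:
    (hpair : ∀ (i : ℕ) (h : i + 1 < k),
      Nat.card {e : E // MGBetween f s e (u ⟨i, Nat.lt_of_succ_lt h⟩) (u ⟨i + 1, h⟩)} = 2)
    -- internal chain vertices are incident only to chain edges:
    (hint : ∀ (i : ℕ) (h1 : 0 < i) (h2 : i + 1 < k) (e : E),
      MGInc f s (u ⟨i, Nat.lt_of_succ_lt h2⟩) e →
      ∃ (j : ℕ) (hj : j + 1 < k),
        MGBetween f s e (u ⟨j, Nat.lt_of_succ_lt hj⟩) (u ⟨j + 1, hj⟩))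
    -- the contracted multigraph `G'`: non-internal vertices, non-chain edges plus two new
    -- parallel edges between `u 0` and `u (k-1)`:
    (f' s' : ({e : E // ¬ ∃ (j : ℕ) (hj : j + 1 < k),
        MGBetween f s e (u ⟨j, Nat.lt_of_succ_lt hj⟩) (u ⟨j + 1, hj⟩)} ⊕ Fin 2) →
      {w : V // ¬ ∃ (i : ℕ) (_ : 0 < i) (h2 : i + 1 < k), w = u ⟨i, Nat.lt_of_succ_lt h2⟩})
    (hf' : ∀ e, (f' (Sum.inl e) : V) = f e.val ∧ (s' (Sum.inl e) : V) = s e.val)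
    (hnew : ∀ j : Fin 2, (f' (Sum.inr j) : V) = u ⟨0, by omega⟩ ∧
      (s' (Sum.inr j) : V) = u ⟨k - 1, by omega⟩) :
    MGLoopless f' s' ∧ MGFourRegular f' s' ∧ MGBiconnected f' s' := by
  let a : {w // ¬ IsChainInterior u w} := ⟨u ⟨0, by omega⟩, not_isChainInterior_first hu _⟩
  let b : {w // ¬ IsChainInterior u w} :=
    ⟨u ⟨k - 1, by omega⟩, not_isChainInterior_last hu _⟩
  have hab : a ≠ b := fun h => by
    have := congrArg Fin.val (hu (congrArg Subtype.val h))
    simp only at this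
    omega
  have hnew' : ∀ j, f' (.inr j) = a ∧ s' (.inr j) = b :=
    fun j => ⟨Subtype.ext (hnew j).1, Subtype.ext (hnew j).2⟩
  have hC : ∀ e, IsChainEdge f s u e → ∀ x, MGInc f s x e →
      IsChainInterior u x ∨ x = a ∨ x = b :=
    fun e he x hx => he.inc hx _ _
  have hD : ∀ e, ¬ IsChainEdge f s u e → ∀ x, MGInc f s x e → ¬ IsChainInterior u x := by
    rintro e he x hx ⟨i, hi, hik, rfl⟩
    exact he (hint i hi hik e hx)
  have hCa : Nat.card {e // MGInc f s a e ∧ IsChainEdge f s u e} = Nat.card (Fin 2) :=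
    (Nat.card_congr (Equiv.subtypeEquivRight fun _ => inc_first_and_isChainEdge_iff hu _)).trans
      ((hpair 0 (by omega)).trans (Nat.card_fin 2).symm)
  have hCb : Nat.card {e // MGInc f s b e ∧ IsChainEdge f s u e} = Nat.card (Fin 2) :=
    (Nat.card_congr (Equiv.subtypeEquivRight fun _ =>
      inc_last_and_isChainEdge_iff hu _ (by omega))).trans
        ((hpair (k - 2) (by omega)).trans (Nat.card_fin 2).symm)
  exact ⟨hloopless.contract hf' hnew' hab, hreg.contract hf' hnew' hC hCa hCb,
    hbi.contract hf' hnew' hC hD hab⟩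
end

section
/- Let G be a simple biconnected 4-regular graph that is not 3-connected, and let {u, v} be a minimal separation pair with smallest component A_{u,v}, where deg_A(u) = deg_A(v) = 2 and removing u, v yields exactly two components. If A_{u,v} has at most 3 vertices, then G contains a multi-edge, contradicting simplicity; hence A_{u,v} has at least 4 vertices. -/
/-- Reachability in `G` by walks avoiding both vertices `u` and `v`. -/
def AvoidReach {V : Type} (G : SimpleGraph V) (u v : V) : V → V → Prop :=
  Relation.ReflTransGen (fun x y => x ≠ u ∧ x ≠ v ∧ y ≠ u ∧ y ≠ v ∧ G.Adj x y)

/-- `{u, v}` is a separation pair of `G`: its removal disconnects the rest. -/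
def SepPair {V : Type} (G : SimpleGraph V) (u v : V) : Prop :=
  u ≠ v ∧ ∃ a b : V, a ≠ u ∧ a ≠ v ∧ b ≠ u ∧ b ≠ v ∧ ¬ AvoidReach G u v a b

/-- `C` is a connected component obtained by removing the separation pair `{x, y}`,
with at least one further vertex outside `C ∪ {x, y}`. -/
def IsSepComponent {V : Type} (G : SimpleGraph V) (x y : V) (C : Set V) : Prop :=
  x ≠ y ∧ x ∉ C ∧ y ∉ C ∧ C.Nonempty ∧
  (∀ a ∈ C, ∀ b ∈ C, AvoidReach G x y a b) ∧
  (∀ a ∈ C, ∀ b : V, G.Adj a b → b = x ∨ b = y ∨ b ∈ C) ∧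
  (∃ w : V, w ≠ x ∧ w ≠ y ∧ w ∉ C)

/-- Let `G` be a simple biconnected 4-regular graph that is not 3-connected,
and let `{u, v}` be a minimal separation pair whose smallest component `A` receives exactly two
edges from each of `u` and `v`, such that removing `u, v` yields exactly two components. Then
`A` has at least 4 vertices (with at most 3 vertices a multi-edge would be forced, contradicting
simplicity). -/
theorem stmt_18 {V : Type} [Finite V] (G : SimpleGraph V)
    (hreg : ∀ v : V, Nat.card {w : V // G.Adj v w} = 4)
    (hconn : G.Connected)
    (hbi : ∀ w a b : V, a ≠ w → b ≠ w →
      Relation.ReflTransGen (fun x y => x ≠ w ∧ y ≠ w ∧ G.Adj x y) a b)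
    (hnot3 : ∃ x y : V, SepPair G x y)
    (u v : V) (A : Set V) (hA : IsSepComponent G u v A)
    -- the complement is the unique second component:
    (hB : ∀ w, w ≠ u → w ≠ v → w ∉ A → ∀ w', w' ≠ u → w' ≠ v → w' ∉ A → AvoidReach G u v w w')
    -- `A` is a smallest component over all separation pairs:
    (hmin : ∀ (x y : V) (C : Set V), IsSepComponent G x y C → Nat.card A ≤ Nat.card C)
    -- minimality of the separation pair `{u, v}`:
    (hminA : ∀ a ∈ A, ∀ b ∈ A, ¬ SepPair G a b)
    (hminAu : ∀ a ∈ A, ¬ SepPair G a u ∧ ¬ SepPair G a v)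
    -- `u` and `v` each send exactly two edges into `A`:
    (hdegu : Nat.card {w : V // w ∈ A ∧ G.Adj u w} = 2)
    (hdegv : Nat.card {w : V // w ∈ A ∧ G.Adj v w} = 2) :
    4 ≤ Nat.card A := by
  obtain ⟨huv, huA, hvA, ⟨a0, ha0⟩, hcomp, hclosed, hw⟩ := hA
  by_contra hlt
  push_neg at hlt
  have hAcard : Nat.card A = A.ncard := Nat.card_coe_set_eq A
  -- neighbor counting
  have hnb : ∀ a ∈ A, (G.neighborSet a).ncard = 4 := by
    intro a _
    rw [← Nat.card_coe_set_eq]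
    exact hreg a
  have hsub : ∀ a ∈ A, G.neighborSet a ⊆ (A \ {a}) ∪ {u, v} := by
    intro a ha w hw
    rcases hclosed a ha w hw with h | h | h
    · exact Or.inr (Or.inl h)
    · exact Or.inr (Or.inr h)
    · exact Or.inl ⟨h, fun he => G.irrefl (he ▸ hw)⟩
  have hApos : 0 < A.ncard := (Set.ncard_pos (Set.toFinite A)).mpr ⟨a0, ha0⟩
  -- lower bound: ncard A ≥ 3
  have h3 : 3 ≤ A.ncard := by
    have h := hnb a0 ha0
    have hle : (G.neighborSet a0).ncard ≤ (A \ {a0}).ncard + 2 := by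
      calc (G.neighborSet a0).ncard ≤ ((A \ {a0}) ∪ {u, v}).ncard :=
            Set.ncard_le_ncard (hsub a0 ha0) (Set.toFinite _)
        _ ≤ (A \ {a0}).ncard + ({u, v} : Set V).ncard := Set.ncard_union_le _ _
        _ ≤ (A \ {a0}).ncard + 2 := by
            exact Nat.add_le_add_left (le_of_eq (Set.ncard_pair huv)) _
    have hd : (A \ {a0}).ncard = A.ncard - 1 := Set.ncard_diff_singleton_of_mem ha0
    omega
  have hA3 : A.ncard = 3 := by omega
  -- each a ∈ A is adjacent to both u and v
  have hadj : ∀ a ∈ A, G.Adj a u ∧ G.Adj a v := by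
    intro a ha
    have hsplit := Set.ncard_inter_add_ncard_diff_eq_ncard (G.neighborSet a) A
      (Set.toFinite _)
    have hin : (G.neighborSet a ∩ A).ncard ≤ 2 := by
      have hsub2 : G.neighborSet a ∩ A ⊆ A \ {a} := by
        intro w hw
        exact ⟨hw.2, fun he => G.irrefl (he ▸ hw.1)⟩
      calc (G.neighborSet a ∩ A).ncard ≤ (A \ {a}).ncard :=
            Set.ncard_le_ncard hsub2 (Set.toFinite _)
        _ = A.ncard - 1 := Set.ncard_diff_singleton_of_mem ha
        _ ≤ 2 := by omega
    have hout : G.neighborSet a \ A ⊆ ({u, v} : Set V) := by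
      intro w hw
      rcases hclosed a ha w hw.1 with h | h | h
      · exact Or.inl h
      · exact Or.inr h
      · exact absurd h hw.2
    have houtle : (G.neighborSet a \ A).ncard ≤ 2 := by
      calc (G.neighborSet a \ A).ncard ≤ ({u, v} : Set V).ncard :=
            Set.ncard_le_ncard hout (Set.toFinite _)
        _ = 2 := Set.ncard_pair huv
    have hnba := hnb a ha
    have heq : (G.neighborSet a \ A).ncard = 2 := by omega
    have heqset : G.neighborSet a \ A = ({u, v} : Set V) :=
      Set.eq_of_subset_of_ncard_le hout (by rw [heq, Set.ncard_pair huv]) (Set.toFinite _)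
    constructor
    · have : u ∈ G.neighborSet a \ A := heqset ▸ (Or.inl rfl)
      exact this.1
    · have : v ∈ G.neighborSet a \ A := heqset ▸ (Or.inr rfl)
      exact this.1
  -- then u has 3 neighbors in A
  have hset : {w : V | w ∈ A ∧ G.Adj u w} = A := by
    ext w
    constructor
    · exact fun h => h.1
    · exact fun h => ⟨h, ((hadj w h).1).symm⟩
  have : Nat.card {w : V // w ∈ A ∧ G.Adj u w} = 3 := by
    have h1 : Nat.card {w : V // w ∈ A ∧ G.Adj u w}
        = ({w : V | w ∈ A ∧ G.Adj u w}).ncard := Nat.card_coe_set_eq _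
    rw [h1, hset, hA3]
  omega
end
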